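/- Let k be a field of characteristic ≠ 2, 3. The linear map ρ : FK(3) → FK(3) defined on generators by ρ(c) = aba, ρ(a) = 0, ρ(b) = 0 extends to a well-defined derivation of FK(3). -/

import Mathlib

noncomputable section

open FreeAlgebra

/-- The defining relations of the Fomin–Kirillov algebra `FK(3)`:
`a², b², c², ab+bc+ca, ba+ac+cb` (as a relation identifying them with `0`). -/
inductive FKRel (k : Type*) [Field k] : FreeAlgebra k (Fin 3) → FreeAlgebra k (Fin 3) → Prop
  | ra : FKRel k (ι k 0 * ι k 0) 0
  | rb : FKRel k (ι k 1 * ι k 1) 0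
  | rc : FKRel k (ι k 2 * ι k 2) 0
  | r1 : FKRel k (ι k 0 * ι k 1 + ι k 1 * ι k 2 + ι k 2 * ι k 0) 0
  | r2 : FKRel k (ι k 1 * ι k 0 + ι k 0 * ι k 2 + ι k 2 * ι k 1) 0

/-- The Fomin–Kirillov algebra `FK(3) = k⟨a,b,c⟩/(a², b², c², ab+bc+ca, ba+ac+cb)`. -/
abbrev FK (k : Type*) [Field k] := RingQuot (FKRel k)

variable (k : Type*) [Field k]

/-- The generator `a` of `FK(3)`. -/
def fa : FK k := RingQuot.mkAlgHom k (FKRel k) (ι k 0)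

/-- The generator `b` of `FK(3)`. -/
def fb : FK k := RingQuot.mkAlgHom k (FKRel k) (ι k 1)

/-- The generator `c` of `FK(3)`. -/
def fc : FK k := RingQuot.mkAlgHom k (FKRel k) (ι k 2)

variable {k}

lemma haa : fa k * fa k = 0 := by
  simpa [fa] using RingQuot.mkAlgHom_rel k (FKRel.ra (k := k))

lemma hbb : fb k * fb k = 0 := by
  simpa [fb] using RingQuot.mkAlgHom_rel k (FKRel.rb (k := k))

lemma hcc : fc k * fc k = 0 := by
  simpa [fc] using RingQuot.mkAlgHom_rel k (FKRel.rc (k := k))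

lemma hr1 : fa k * fb k + fb k * fc k + fc k * fa k = 0 := by
  simpa [fa, fb, fc] using RingQuot.mkAlgHom_rel k (FKRel.r1 (k := k))

lemma hr2 : fb k * fa k + fa k * fc k + fc k * fb k = 0 := by
  simpa [fa, fb, fc] using RingQuot.mkAlgHom_rel k (FKRel.r2 (k := k))

/-- `bab = aba` in `FK(3)`. -/
lemma hbab : fb k * fa k * fb k = fa k * (fb k * fa k) := by
  have key : (fb k * fa k + fa k * fc k + fc k * fb k) * fb k
      - fa k * (fb k * fa k + fa k * fc k + fc k * fb k)
      - fc k * (fb k * fb k) + fa k * fa k * fc k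
      = fb k * fa k * fb k - fa k * (fb k * fa k) := by noncomm_ring
  rw [hr2, hbb, haa] at key
  exact sub_eq_zero.mp (by simpa using key.symm)

/-- `abab = 0`. -/
lemma X3 : fa k * fb k * fa k * fb k = 0 := by
  have h1 : fa k * fb k * fa k * fb k = fa k * (fb k * fa k * fb k) := by noncomm_ring
  rw [h1, hbab]
  have h2 : fa k * (fa k * (fb k * fa k)) = fa k * fa k * (fb k * fa k) := by noncomm_ring
  rw [h2, haa, zero_mul]

/-- `baba = 0`. -/
lemma Xbaba : fb k * (fa k * fb k * fa k) = 0 := by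
  have h1 : fb k * (fa k * fb k * fa k) = fb k * fa k * fb k * fa k := by noncomm_ring
  rw [h1, hbab]
  have h2 : fa k * (fb k * fa k) * fa k = fa k * fb k * (fa k * fa k) := by noncomm_ring
  rw [h2, haa, mul_zero]

/-- `abaa = 0`. -/
lemma Xabaa : fa k * fb k * fa k * fa k = 0 := by
  have h1 : fa k * fb k * fa k * fa k = fa k * fb k * (fa k * fa k) := by noncomm_ring
  rw [h1, haa, mul_zero]

lemma Xaaba : fa k * (fa k * fb k * fa k) = 0 := by
  have h1 : fa k * (fa k * fb k * fa k) = fa k * fa k * (fb k * fa k) := by noncomm_ring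
  rw [h1, haa, zero_mul]

lemma p3 : fa k * (fb k * fa k) * fc k + fb k * fa k * fc k * fa k = 0 := by
  have key : fb k * fa k * (fa k * fb k + fb k * fc k + fc k * fa k)
      - fb k * (fa k * fa k) * fb k
      = fb k * fa k * fb k * fc k + fb k * fa k * fc k * fa k := by noncomm_ring
  rw [hr1, haa] at key
  have h1 : fb k * fa k * fb k * fc k = fa k * (fb k * fa k) * fc k := by rw [hbab]
  rw [h1] at key
  simpa using key.symm

lemma p2 : fb k * fa k * fc k * fa k + fb k * fc k * fb k * fa k = 0 := by
  have key : fb k * (fb k * fa k + fa k * fc k + fc k * fb k) * fa k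
      - fb k * fb k * (fa k * fa k)
      = fb k * fa k * fc k * fa k + fb k * fc k * fb k * fa k := by noncomm_ring
  rw [hr2, hbb] at key
  simpa using key.symm

lemma p1 : fb k * fc k * fb k * fa k + fc k * (fa k * fb k * fa k) = 0 := by
  have key : (fa k * fb k + fb k * fc k + fc k * fa k) * (fb k * fa k)
      - fa k * (fb k * fb k) * fa k
      = fb k * fc k * fb k * fa k + fc k * (fa k * fb k * fa k) := by noncomm_ring
  rw [hr1, hbb] at key
  simpa using key.symm

/-- `abac + caba = 0`. -/
lemma X1 : fa k * fb k * fa k * fc k + fc k * (fa k * fb k * fa k) = 0 := by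
  have e : fa k * fb k * fa k * fc k + fc k * (fa k * fb k * fa k)
      = (fa k * (fb k * fa k) * fc k + fb k * fa k * fc k * fa k)
        - (fb k * fa k * fc k * fa k + fb k * fc k * fb k * fa k)
        + (fb k * fc k * fb k * fa k + fc k * (fa k * fb k * fa k)) := by
    rw [show fa k * (fb k * fa k) * fc k = fa k * fb k * fa k * fc k by noncomm_ring]
    abel
  rw [e, p3, p2, p1]; simp

variable (k)

open TrivSqZeroExt in
/-- The algebra hom to the trivial square-zero extension encoding the derivation. -/
def ψ : FreeAlgebra k (Fin 3) →ₐ[k] TrivSqZeroExt (FK k) (FK k) :=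
  FreeAlgebra.lift k ![inl (fa k), inl (fb k), inl (fc k) + inr (fa k * fb k * fa k)]

open TrivSqZeroExt in
lemma ψ_rel : ∀ ⦃x y⦄, FKRel k x y → ψ k x = ψ k y := by
  intro x y h
  induction h with
  | ra => ext <;> simp [ψ, haa]
  | rb => ext <;> simp [ψ, hbb]
  | rc =>
      ext
      · simp [ψ, hcc]
      · simp [ψ, snd_mul, smul_eq_mul, MulOpposite.smul_eq_mul_unop]
        rw [add_comm]; exact X1
  | r1 =>
      ext
      · simp [ψ, hr1]
      · simp [ψ, snd_mul, smul_eq_mul, MulOpposite.smul_eq_mul_unop, Xbaba, Xabaa]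
  | r2 =>
      ext
      · simp [ψ, hr2]
      · simp [ψ, snd_mul, smul_eq_mul, MulOpposite.smul_eq_mul_unop, Xaaba, X3]

open TrivSqZeroExt in
def Φ : FK k →ₐ[k] TrivSqZeroExt (FK k) (FK k) :=
  RingQuot.liftAlgHom k ⟨ψ k, ψ_rel k⟩

open TrivSqZeroExt in
lemma Φ_fst (x : FK k) : (Φ k x).fst = x := by
  have h : (fstHom k (FK k) (FK k)).comp (Φ k) = AlgHom.id k (FK k) := by
    apply RingQuot.ringQuot_ext'
    apply FreeAlgebra.hom_ext
    funext i
    fin_cases i <;>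
      simp [Φ, ψ, RingQuot.liftAlgHom_mkAlgHom_apply, fa, fb, fc]
  simpa using congrFun (congrArg DFunLike.coe h) x

/-- Over a field `k` of characteristic `≠ 2, 3`, the assignment `c ↦ aba`, `a ↦ 0`, `b ↦ 0`
extends to a well-defined derivation `ρ` of the Fomin–Kirillov algebra `FK(3)`. -/
theorem fk3_derivation_c_to_aba (h2 : (2 : k) ≠ 0) (h3 : (3 : k) ≠ 0) :
    ∃ ρ : FK k →ₗ[k] FK k,
      (∀ x y : FK k, ρ (x * y) = ρ x * y + x * ρ y) ∧
      ρ (fc k) = fa k * fb k * fa k ∧ ρ (fa k) = 0 ∧ ρ (fb k) = 0 := by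
  refine ⟨{ toFun := fun x => (Φ k x).snd,
            map_add' := by intro x y; simp,
            map_smul' := by intro c x; simp }, ?_, ?_, ?_, ?_⟩
  · intro x y
    simp only [LinearMap.coe_mk, AddHom.coe_mk, map_mul, TrivSqZeroExt.snd_mul, Φ_fst,
      smul_eq_mul, MulOpposite.smul_eq_mul_unop, MulOpposite.unop_op]
    exact add_comm _ _
  · show (Φ k (fc k)).snd = _
    simp [Φ, fc, RingQuot.liftAlgHom_mkAlgHom_apply, ψ]
  · show (Φ k (fa k)).snd = _
    simp [Φ, fa, RingQuot.liftAlgHom_mkAlgHom_apply, ψ]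
  · show (Φ k (fb k)).snd = _
    simp [Φ, fb, RingQuot.liftAlgHom_mkAlgHom_apply, ψ]
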